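/- Define f on 3×3 real matrices by f(m) = m₁₁ + m₁₂ + m₂₁ - m₂₂ - 2m₃₃. Then for any (x,y) and (x',y') in the blunt square S_b = [-1,1]² \ {-1,1}², and any s,t ≥ 0 with s·t > 0, we have f(m) < 0 where m is the rank-one matrix (s·x, s·y ; s) ⊗ (t·x', t·y' ; t), i.e., mᵢⱼ = uᵢvⱼ with u = (sx, sy, s), v = (tx', ty', t). -/

import Mathlib

/-!
Writing `u = (s x, s y, s)` and `v = (t x', t y', t)`, the value of `f` on `u ⊗ v` is
`s t (x (x' + y') + y (x' - y') - 2)`. Since `|x|, |y| ≤ 1`, the bracketed pairing is at most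
`|x' + y'| + |x' - y'| = 2 max(|x'|, |y'|) ≤ 2`. Equality would need both `|x| = 1` and `|y| = 1`
(when `x' ± y'` are both nonzero), or `|x'| = |y'| = 1` (otherwise); the blunt square excludes both.
-/

lemma abs_add_add_abs_sub_le_two_mul {p q c : ℝ} (hp : |p| ≤ c) (hq : |q| ≤ c) :
    |p + q| + |p - q| ≤ 2 * c := by
  rw [abs_le] at hp hq
  rcases abs_cases (p + q) with ⟨h₁, -⟩ | ⟨h₁, -⟩ <;>
    rcases abs_cases (p - q) with ⟨h₂, -⟩ | ⟨h₂, -⟩ <;> linarith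

lemma mul_le_abs_of_abs_le_one {a p : ℝ} (ha : |a| ≤ 1) : a * p ≤ |p| :=
  (le_abs_self _).trans <| (abs_mul a p).trans_le <| mul_le_of_le_one_left (abs_nonneg p) ha

lemma mul_lt_abs_of_abs_lt_one {a p : ℝ} (ha : |a| < 1) (hp : p ≠ 0) : a * p < |p| :=
  (le_abs_self _).trans_lt <| (abs_mul a p).trans_lt <| mul_lt_of_lt_one_left (abs_pos.2 hp) ha

lemma blunt_square_pairing_lt_two {x y x' y' : ℝ}
    (hx : |x| ≤ 1) (hy : |y| ≤ 1) (hx' : |x'| ≤ 1) (hy' : |y'| ≤ 1)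
    (h1 : ¬ (|x| = 1 ∧ |y| = 1)) (h2 : ¬ (|x'| = 1 ∧ |y'| = 1)) :
    x * x' + x * y' + y * x' - y * y' < 2 := by
  rw [show x * x' + x * y' + y * x' - y * y' = x * (x' + y') + y * (x' - y') by ring]
  by_cases habs : |x'| = |y'|
  · have hlt : |x'| < 1 := hx'.lt_of_ne fun h => h2 ⟨h, habs ▸ h⟩
    calc x * (x' + y') + y * (x' - y') ≤ |x' + y'| + |x' - y'| :=
          add_le_add (mul_le_abs_of_abs_le_one hx) (mul_le_abs_of_abs_le_one hy)
      _ ≤ 2 * |x'| := abs_add_add_abs_sub_le_two_mul le_rfl habs.ge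
      _ < 2 := by linarith
  · have hsum : x' + y' ≠ 0 := fun h => habs (by rw [eq_neg_of_add_eq_zero_left h, abs_neg])
    have hdiff : x' - y' ≠ 0 := fun h => habs (by rw [sub_eq_zero.1 h])
    have hstrict : x * (x' + y') + y * (x' - y') < |x' + y'| + |x' - y'| := by
      rcases not_and_or.1 h1 with hx1 | hy1
      · exact add_lt_add_of_lt_of_le (mul_lt_abs_of_abs_lt_one (hx.lt_of_ne hx1) hsum)
          (mul_le_abs_of_abs_le_one hy)
      · exact add_lt_add_of_le_of_lt (mul_le_abs_of_abs_le_one hx)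
          (mul_lt_abs_of_abs_lt_one (hy.lt_of_ne hy1) hdiff)
    linarith [abs_add_add_abs_sub_le_two_mul hx' hy']

theorem f_neg_on_blunt_square_products_general (x y x' y' s t : ℝ)
    (hx : |x| ≤ 1) (hy : |y| ≤ 1) (hx' : |x'| ≤ 1) (hy' : |y'| ≤ 1)
    (h1 : ¬ (|x| = 1 ∧ |y| = 1)) (h2 : ¬ (|x'| = 1 ∧ |y'| = 1))
    (hst : 0 < s * t)
    (m : Matrix (Fin 3) (Fin 3) ℝ)
    (hm : ∀ i j, m i j = ![s * x, s * y, s] i * ![t * x', t * y', t] j) :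
    m 0 0 + m 0 1 + m 1 0 - m 1 1 - 2 * m 2 2 < 0 := by
  have hpair := blunt_square_pairing_lt_two hx hy hx' hy' h1 h2
  calc m 0 0 + m 0 1 + m 1 0 - m 1 1 - 2 * m 2 2
      = s * t * (x * x' + x * y' + y * x' - y * y' - 2) := by
        simp only [hm, Matrix.cons_val_zero, Matrix.cons_val_one, Matrix.cons_val]; ring
    _ < 0 := mul_neg_of_pos_of_neg hst (by linarith)

theorem f_neg_on_blunt_square_products (x y x' y' s t : ℝ)
    (hx : |x| ≤ 1) (hy : |y| ≤ 1) (hx' : |x'| ≤ 1) (hy' : |y'| ≤ 1)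
    (h1 : ¬ (|x| = 1 ∧ |y| = 1)) (h2 : ¬ (|x'| = 1 ∧ |y'| = 1))
    (hs : 0 ≤ s) (ht : 0 ≤ t) (hst : 0 < s * t)
    (m : Matrix (Fin 3) (Fin 3) ℝ)
    (hm : ∀ i j, m i j = ![s * x, s * y, s] i * ![t * x', t * y', t] j) :
    m 0 0 + m 0 1 + m 1 0 - m 1 1 - 2 * m 2 2 < 0 :=
  f_neg_on_blunt_square_products_general x y x' y' s t hx hy hx' hy' h1 h2 hst m hm
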